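/- arXiv:2412.17237 — 7 statements merged into one kernel-verified Lean document; each statement's English description precedes it below -/
import Mathlib

section
/- (Generalized Schur–Weyl duality.) Fix N ≥ 1, n ≥ 1, and d : Fin N → ℕ with d i ≥ 1. Let the index type be J := Π i : Fin N, (Fin n → Fin (d i)). For π : Fin N → Equiv.Perm (Fin n), let P(π) : Matrix J J ℂ be the permutation matrix of the bijection sending h : J to the function i ↦ (h i) ∘ (π i)⁻¹, and for a family U with U i ∈ Matrix.unitaryGroup (Fin (d i)) ℂ let Q(U) : Matrix J J ℂ be the matrix with entries Q(U)_{h,g} = Πᵢ Π_{k : Fin n} (U i)_{h i k, g i k} (that is, (U 0)^{⊗n} ⊗ ⋯ ⊗ (U (N-1))^{⊗n}). Then: (a) a matrix X : Matrix J J ℂ commutes with P(π) for every π : Fin N → Equiv.Perm (Fin n) if and only if X lies in the ℂ-linear span of {Q(U) : each U i unitary}; (b) X commutes with Q(U) for every such family U if and only if X lies in the ℂ-linear span of {P(π) : π : Fin N → Equiv.Perm (Fin n)}. -/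
/-!
Part (a): `X` commutes with every `P(π)` iff its entries are constant on the orbits of the diagonal
action of `Π i, Sₙ` on pairs `(h, g)`, and the orbit of `(h, g)` is determined by the exponent of
the monomial `∏ i, ∏ k, x ⟨i, (h i k, g i k)⟩`. A functional `f` vanishing on every `Q(M)` makes the
polynomial `M ↦ f (Q(M))` zero, so the coefficients of `f` sum to zero over every orbit, and
`f X = 0`. To restrict to unitary `M`: `Q` is multilinear in the factors `(M i)^{⊗n}`, and a
polynomial vanishing on the unitary group vanishes everywhere. Indeed it vanishes on
`W * diagonal z * V` for `z` on the torus, hence for all `z`, hence on invertible matrices by the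
singular value decomposition, and then `p * det = 0` forces `p = 0`.

Part (b): the span of the `P(π)` is the image of the group algebra `ℂ[Π i, Sₙ]`, which is semisimple
by Maschke's theorem, so the Jacobson density theorem gives the double commutant theorem; by (a)
the commutant of the `P(π)` is the span of the `Q(U)`.
-/

open Matrix

/-- Permutation matrix of the bijection on `Π i : Fin N, (Fin n → Fin (d i))`
sending `h` to `fun i => (h i) ∘ (π i)⁻¹`. -/
noncomputable def permTensorMatFam {N : ℕ} (d : Fin N → ℕ) (n : ℕ)
    (π : Fin N → Equiv.Perm (Fin n)) :
    Matrix (∀ i, Fin n → Fin (d i)) (∀ i, Fin n → Fin (d i)) ℂ :=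
  Matrix.of fun h g => if (fun i k => h i ((π i)⁻¹ k)) = g then 1 else 0

/-- The matrix `(U 0)^{⊗n} ⊗ ⋯ ⊗ (U (N-1))^{⊗n}`. -/
noncomputable def collectiveMatFam {N : ℕ} (d : Fin N → ℕ) (n : ℕ)
    (U : ∀ i, Matrix (Fin (d i)) (Fin (d i)) ℂ) :
    Matrix (∀ i, Fin n → Fin (d i)) (∀ i, Fin n → Fin (d i)) ℂ :=
  Matrix.of fun h g => ∏ i, ∏ k, U i (h i k) (g i k)

open Finset MvPolynomial

theorem Submodule.mem_span_of_forall_dual {K V : Type*} [Field K] [AddCommGroup V] [Module K V]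
    {s : Set V} {x : V} (h : ∀ f : Module.Dual K V, (∀ y ∈ s, f y = 0) → f x = 0) :
    x ∈ span K s := by
  rw [← Subspace.dualAnnihilator_dualCoannihilator_eq (W := span K s), mem_dualCoannihilator]
  exact fun f hf => h f fun y hy => (mem_dualAnnihilator f).1 hf y (subset_span hy)

theorem Matrix.dual_apply_eq_sum {m n R : Type*} [Fintype m] [Fintype n] [DecidableEq m]
    [DecidableEq n] [CommSemiring R] (f : Module.Dual R (Matrix m n R)) (Y : Matrix m n R) :
    f Y = ∑ a, ∑ b, Y a b * f (single a b 1) := by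
  conv_lhs => rw [matrix_eq_sum_single Y]
  simp only [map_sum]
  refine sum_congr rfl fun a _ => sum_congr rfl fun b _ => ?_
  rw [← smul_eq_mul, ← map_smul, smul_single, smul_eq_mul, mul_one]

theorem MvPolynomial.eval_sum_dual {ι σ R : Type*} [Fintype ι] [DecidableEq ι] [CommRing R]
    (φ : ι → ι → MvPolynomial σ R) (f : Module.Dual R (Matrix ι ι R)) (z : σ → R) :
    eval z (∑ a, ∑ b, C (f (single a b 1)) * φ a b) = f (of fun a b => eval z (φ a b)) := by
  rw [dual_apply_eq_sum f, map_sum]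
  refine sum_congr rfl fun a _ => ?_
  rw [map_sum]
  refine sum_congr rfl fun b _ => ?_
  rw [map_mul, eval_C, of_apply, mul_comm]

theorem Finset.sum_mul_eq_zero_of_fiberwise {α β R : Type*} [Fintype α] [DecidableEq β]
    [CommSemiring R] (p : α → β) {x c : α → R} (hx : ∀ a b, p a = p b → x a = x b)
    (hc : ∀ m, ∑ a with p a = m, c a = 0) : ∑ a, x a * c a = 0 := by
  rw [← sum_fiberwise_of_maps_to (t := univ.image p) fun a _ => mem_image_of_mem p (mem_univ a)]
  refine sum_eq_zero fun m hm => ?_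
  obtain ⟨a₀, -, rfl⟩ := mem_image.1 hm
  rw [sum_congr rfl fun a ha => by rw [hx a a₀ (mem_filter.1 ha).2], ← mul_sum, hc, mul_zero]

theorem exists_perm_comp_eq_of_card_fiber_eq {α β : Type*} [Fintype α] [DecidableEq β]
    {f f' : α → β} (h : ∀ b, #{a | f a = b} = #{a | f' a = b}) :
    ∃ σ : Equiv.Perm α, ∀ a, f (σ a) = f' a := by
  have e : ∀ b, {a // f' a = b} ≃ {a // f a = b} := fun b =>
    Fintype.equivOfCardEq (by rw [Fintype.card_subtype, Fintype.card_subtype, h])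
  exact ⟨(Equiv.sigmaFiberEquiv f').symm.trans
    ((Equiv.sigmaCongrRight e).trans (Equiv.sigmaFiberEquiv f)), fun a => (e (f' a) ⟨a, rfl⟩).2⟩

theorem MultilinearMap.map_mem_span_image_pi {R ι N : Type*} {M : ι → Type*} [CommSemiring R]
    [∀ i, AddCommMonoid (M i)] [AddCommMonoid N] [∀ i, Module R (M i)] [Module R N]
    [DecidableEq ι] [Fintype ι] (f : MultilinearMap R M N) {s : ∀ i, Set (M i)}
    {x : ∀ i, M i} (hx : ∀ i, x i ∈ Submodule.span R (s i)) :
    f x ∈ Submodule.span R (f '' Set.univ.pi s) := by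
  suffices key : ∀ T : Finset ι, ∀ x : ∀ i, M i, (∀ i, x i ∈ Submodule.span R (s i)) →
      (∀ i ∉ T, x i ∈ s i) → f x ∈ Submodule.span R (f '' Set.univ.pi s) from
    key univ x hx fun i hi => absurd (mem_univ i) hi
  intro T
  induction T using Finset.induction_on with
  | empty => exact fun x _ hx => Submodule.subset_span ⟨x, fun i _ => hx i (notMem_empty i), rfl⟩
  | insert j T hj ih =>
    intro x hspan hx
    have : Submodule.span R (s j) ≤
        (Submodule.span R (f '' Set.univ.pi s)).comap (f.toLinearMap x j) := by
      refine Submodule.span_le.2 fun y hy => ih _ (fun i => ?_) (fun i hi => ?_)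
      · rcases eq_or_ne i j with rfl | h
        · simpa using Submodule.subset_span hy
        · simpa [h] using hspan i
      · rcases eq_or_ne i j with rfl | h
        · simpa using hy
        · simpa [h] using hx i (by simp [h, hi])
    simpa using this (hspan j)

namespace Matrix

section PiKronecker

variable {ι R : Type*} [Fintype ι] [CommSemiring R] {m n : ι → Type*}

def piKronecker (A : ∀ i, Matrix (m i) (n i) R) : Matrix (∀ i, m i) (∀ i, n i) R :=
  of fun h g => ∏ i, A i (h i) (g i)

variable (R m n) in
def piKroneckerMultilinear [DecidableEq ι] :
    MultilinearMap R (fun i => Matrix (m i) (n i) R) (Matrix (∀ i, m i) (∀ i, n i) R) where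
  toFun := piKronecker
  map_update_add' A j x y := by
    ext h g
    simp [piKronecker, Function.apply_update (fun i (M : Matrix (m i) (n i) R) => M (h i) (g i)),
      prod_update_of_mem, add_mul]
  map_update_smul' A j c x := by
    ext h g
    simp [piKronecker, Function.apply_update (fun i (M : Matrix (m i) (n i) R) => M (h i) (g i)),
      prod_update_of_mem, mul_assoc]

end PiKronecker

theorem commute_permMatrix_iff {ι R : Type*} [Fintype ι] [DecidableEq ι] [Semiring R]
    (X : Matrix ι ι R) (σ : Equiv.Perm ι) :
    Commute X (σ.permMatrix R) ↔ ∀ a b, X (σ a) (σ b) = X a b := by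
  rw [Commute, SemiconjBy, PEquiv.mul_toMatrix_toPEquiv, PEquiv.toMatrix_toPEquiv_mul,
    ← Matrix.ext_iff]
  simp only [submatrix_apply, id_eq]
  constructor
  · intro h a b
    simpa using (h a (σ b)).symm
  · intro h a b
    simpa using (h a (σ.symm b)).symm

end Matrix

namespace Representation

variable {k G V : Type*} [Field k] [Group G] [AddCommGroup V] [Module k V]

theorem asAlgebraHom_mem_span_range (ρ : Representation k G V) (r : MonoidAlgebra k G) :
    ρ.asAlgebraHom r ∈ Submodule.span k (Set.range ρ) := by
  induction r using MonoidAlgebra.induction_linear with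
  | zero => simp
  | add r s hr hs => simpa using Submodule.add_mem _ hr hs
  | single g c =>
    rw [asAlgebraHom_single]
    exact Submodule.smul_mem _ c (Submodule.subset_span ⟨g, rfl⟩)

theorem commute_conj_asModuleEquiv (ρ : Representation k G V)
    (T : Module.End (MonoidAlgebra k G) ρ.asModule) (g : G) :
    Commute (ρ.asModuleEquiv.toLinearMap ∘ₗ T.restrictScalars k ∘ₗ ρ.asModuleEquiv.symm.toLinearMap)
      (ρ g) := by
  ext v
  simp only [Module.End.mul_apply, LinearMap.comp_apply, LinearEquiv.coe_coe,
    LinearMap.restrictScalars_apply, asModuleEquiv_symm_map_rho, map_smul,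
    asModuleEquiv_map_smul, asAlgebraHom_of]

theorem mem_span_range_of_forall_commute [Finite G] [NeZero (Nat.card G : k)] [Module.Finite k V]
    (ρ : Representation k G V) {f : Module.End k V}
    (hf : ∀ T : Module.End k V, (∀ g, Commute T (ρ g)) → Commute f T) :
    f ∈ Submodule.span k (Set.range ρ) := by
  classical
  let F : Module.End (Module.End (MonoidAlgebra k G) ρ.asModule) ρ.asModule :=
    { toFun := fun m => ρ.asModuleEquiv.symm (f (ρ.asModuleEquiv m))
      map_add' := by simp
      map_smul' := fun T m => by
        have := LinearMap.congr_fun (hf _ (commute_conj_asModuleEquiv ρ T)) (ρ.asModuleEquiv m)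
        simp only [Module.End.mul_apply, LinearMap.comp_apply, LinearEquiv.coe_coe,
          LinearMap.restrictScalars_apply, LinearEquiv.symm_apply_apply] at this
        simp only [RingHom.id_apply, Module.End.smul_def]
        rw [LinearEquiv.symm_apply_eq, this] }
  obtain ⟨s, hs⟩ := Module.Finite.fg_top (R := k) (M := V)
  -- Jacobson density needs `ρ.asModule` semisimple, which is Maschke's theorem.
  obtain ⟨r, hr⟩ := jacobson_density F (s.image ρ.asModuleEquiv.symm)
  have : f = ρ.asAlgebraHom r := by
    refine LinearMap.ext_on hs fun v hv => ?_
    have := congrArg ρ.asModuleEquiv (hr (ρ.asModuleEquiv.symm v) (mem_image_of_mem _ hv))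
    simpa [F, asModuleEquiv_map_smul] using this
  exact this ▸ asAlgebraHom_mem_span_range ρ r

end Representation

theorem Matrix.mem_span_range_of_forall_commute {k G ι : Type*} [Field k] [Group G] [Finite G]
    [NeZero (Nat.card G : k)] [Fintype ι] [DecidableEq ι] (ρ : G →* Matrix ι ι k)
    {X : Matrix ι ι k} (hX : ∀ Y, (∀ g, Commute Y (ρ g)) → Commute X Y) :
    X ∈ Submodule.span k (Set.range ρ) := by
  let e := (toLinAlgEquiv' : Matrix ι ι k ≃ₐ[k] _)
  have h := Representation.mem_span_range_of_forall_commute (e.toMonoidHom.comp ρ) (f := e X)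
    fun T hT => by
      simpa using (hX (e.symm T) fun g => by simpa using (hT g).map e.symm).map e
  simpa [← Set.range_comp, Function.comp_def] using
    Submodule.apply_mem_span_image_of_mem_span e.symm.toLinearMap h

section RCLike

variable {𝕜 κ : Type*} [RCLike 𝕜] [Fintype κ] [DecidableEq κ]

theorem Matrix.diagonal_mem_unitaryGroup {z : κ → 𝕜} (hz : ∀ j, ‖z j‖ = 1) :
    diagonal z ∈ unitaryGroup κ 𝕜 := by
  rw [mem_unitaryGroup_iff, star_eq_conjTranspose, diagonal_conjTranspose, diagonal_mul_diagonal,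
    ← diagonal_one]
  congr 1
  ext j
  simp [RCLike.mul_conj, hz j]

theorem Matrix.exists_unitary_mul_diagonal_mul_unitary {B : Matrix κ κ 𝕜} (hB : IsUnit B.det) :
    ∃ W ∈ unitaryGroup κ 𝕜, ∃ V ∈ unitaryGroup κ 𝕜, ∃ s : κ → 𝕜, B = W * diagonal s * V := by
  have hH : (Bᴴ * B).IsHermitian := isHermitian_conjTranspose_mul_self B
  have hdiag := hH.conjStarAlgAut_star_eigenvectorUnitary
  rw [Unitary.conjStarAlgAut_star_apply] at hdiag
  set V : Matrix κ κ 𝕜 := (hH.eigenvectorUnitary : Matrix κ κ 𝕜)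
  have hV : V ∈ unitaryGroup κ 𝕜 := hH.eigenvectorUnitary.2
  set e := hH.eigenvalues
  have he : ∀ j, (e j : 𝕜) ≠ 0 := by
    have : ∏ j, (e j : 𝕜) ≠ 0 := by
      rw [← hH.det_eq_prod_eigenvalues, det_mul, det_conjTranspose]
      exact mul_ne_zero (star_ne_zero.2 hB.ne_zero) hB.ne_zero
    exact fun j => prod_ne_zero_iff.1 this j (Finset.mem_univ j)
  set s : κ → 𝕜 := fun j => (Real.sqrt (e j) : 𝕜)
  have hss : ∀ j, s j * s j = e j := fun j => by
    simp only [s, ← RCLike.ofReal_mul]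
    exact congrArg _ (Real.mul_self_sqrt (eigenvalues_conjTranspose_mul_self_nonneg B j))
  have hs : ∀ j, s j ≠ 0 := fun j h => he j (by rw [← hss, h, zero_mul])
  refine ⟨B * V * diagonal s⁻¹, ?_, star V, Unitary.star_mem hV, s, ?_⟩
  · rw [mem_unitaryGroup_iff']
    have : star (B * V * diagonal s⁻¹) * (B * V * diagonal s⁻¹) =
        diagonal (star s⁻¹) * (star V * (Bᴴ * B) * V) * diagonal s⁻¹ := by
      simp only [star_mul, star_eq_conjTranspose, diagonal_conjTranspose, Matrix.mul_assoc]
    rw [this, hdiag, diagonal_mul_diagonal, diagonal_mul_diagonal, ← diagonal_one]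
    congr 1
    ext j
    have : star (s j) = s j := RCLike.conj_ofReal _
    simp only [Pi.star_apply, Pi.inv_apply, star_inv₀, this, Function.comp_apply, ← hss]
    field_simp [hs j]
  · rw [mul_assoc (B * V), diagonal_mul_diagonal, mul_assoc, mul_assoc]
    have : (fun j => s⁻¹ j * s j) = 1 := funext fun j => inv_mul_cancel₀ (hs j)
    rw [this, Pi.one_def, diagonal_one, Matrix.one_mul, mem_unitaryGroup_iff.1 hV, Matrix.mul_one]

end RCLike

section UnitaryDensity

variable {κ : Type*} [Fintype κ] [DecidableEq κ]

theorem Complex.infinite_sphere_zero_one : (Metric.sphere (0 : ℂ) 1).Infinite :=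
  (isPreconnected_sphere (by simp [Complex.rank_real_complex]) 0 1).infinite_of_nontrivial
    ⟨1, by simp, -1, by simp, by norm_num⟩

theorem MvPolynomial.eval_unitary_mul_diagonal_mul_eq_zero {p : MvPolynomial (κ × κ) ℂ}
    (hp : ∀ U ∈ unitaryGroup κ ℂ, eval (fun v => U v.1 v.2) p = 0)
    {W V : Matrix κ κ ℂ} (hW : W ∈ unitaryGroup κ ℂ) (hV : V ∈ unitaryGroup κ ℂ) (z : κ → ℂ) :
    eval (fun v => (W * diagonal z * V) v.1 v.2) p = 0 := by
  obtain ⟨r, hr⟩ : ∃ r : MvPolynomial κ ℂ,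
      ∀ z, eval z r = eval (fun v => (W * diagonal z * V) v.1 v.2) p := by
    refine ⟨bind₁ (fun v => ∑ j, C (W v.1 j * V j v.2) * X j) p, fun z => ?_⟩
    rw [hom_bind₁]
    refine eval₂Hom_congr (RingHom.ext eval_C) (_root_.funext fun v => ?_) rfl
    simp only [map_sum, map_mul, eval_C, eval_X]
    rw [mul_apply]
    exact sum_congr rfl fun j _ => by rw [mul_diagonal]; ring
  have hr0 : r = 0 := funext_set (fun _ => Metric.sphere 0 1)
    (fun _ => Complex.infinite_sphere_zero_one) fun z hz => by
      rw [hr, map_zero]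
      refine hp _ (mul_mem (mul_mem hW (diagonal_mem_unitaryGroup fun j => ?_)) hV)
      simpa using hz j trivial
  rw [← hr, hr0, map_zero]

theorem MvPolynomial.eq_zero_of_eval_unitaryGroup {p : MvPolynomial (κ × κ) ℂ}
    (hp : ∀ U ∈ unitaryGroup κ ℂ, eval (fun v => U v.1 v.2) p = 0) : p = 0 := by
  have hdet : p * det (mvPolynomialX κ κ ℂ) = 0 := funext fun A => by
    rw [map_mul, eval_det_mvPolynomialX, map_zero]
    by_cases hA : IsUnit (of fun i j => A (i, j)).det
    · obtain ⟨W, hW, V, hV, s, hB⟩ := exists_unitary_mul_diagonal_mul_unitary hA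
      have := eval_unitary_mul_diagonal_mul_eq_zero hp hW hV s
      rw [← hB] at this
      exact mul_eq_zero_of_left (by simpa using this) _
    · rw [isUnit_iff_ne_zero, not_not] at hA
      rw [hA, mul_zero]
  exact (mul_eq_zero.1 hdet).resolve_right (det_mvPolynomialX_ne_zero κ ℂ)

theorem Matrix.piKronecker_const_mem_span_unitaryGroup {ι : Type*} [Fintype ι] [DecidableEq ι]
    (A : Matrix κ κ ℂ) :
    piKronecker (fun _ : ι => A) ∈
      Submodule.span ℂ ((fun U => piKronecker fun _ : ι => U) '' unitaryGroup κ ℂ) := by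
  refine Submodule.mem_span_of_forall_dual fun f hf => ?_
  have hpA : ∀ A : Matrix κ κ ℂ, eval (fun v => A v.1 v.2)
      (∑ a, ∑ b, C (f (single a b 1)) * ∏ k, X (a k, b k)) = f (piKronecker fun _ => A) :=
    fun A => by simp only [eval_sum_dual, map_prod, eval_X, piKronecker]
  have hp := eq_zero_of_eval_unitaryGroup fun U hU => by
    rw [hpA]
    exact hf _ ⟨U, hU, rfl⟩
  rw [← hpA, hp, map_zero]

end UnitaryDensity

def diagPermHom {N : ℕ} (d : Fin N → ℕ) (n : ℕ) :
    (Fin N → Equiv.Perm (Fin n)) →* Equiv.Perm (∀ i, Fin n → Fin (d i)) where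
  toFun π := Equiv.piCongrRight fun i => (π i).arrowCongr (Equiv.refl _)
  map_one' := by ext; simp [← Equiv.Perm.inv_def]
  map_mul' π π' := by ext; simp [← Equiv.Perm.inv_def]

section SchurWeyl

variable {N n : ℕ} {d : Fin N → ℕ}

theorem diagPermHom_apply (π : Fin N → Equiv.Perm (Fin n)) (h : ∀ i, Fin n → Fin (d i)) :
    diagPermHom d n π h = fun i k => h i ((π i)⁻¹ k) := rfl

theorem permTensorMatFam_eq_permMatrix (π : Fin N → Equiv.Perm (Fin n)) :
    permTensorMatFam d n π = (diagPermHom d n π).permMatrix ℂ := by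
  ext h g
  simp [permTensorMatFam, PEquiv.toMatrix_apply, diagPermHom_apply]

theorem collectiveMatFam_eq_piKronecker (U : ∀ i, Matrix (Fin (d i)) (Fin (d i)) ℂ) :
    collectiveMatFam d n U = piKronecker fun i => piKronecker fun _ : Fin n => U i := rfl

theorem commute_collectiveMatFam_permTensorMatFam (U : ∀ i, Matrix (Fin (d i)) (Fin (d i)) ℂ)
    (π : Fin N → Equiv.Perm (Fin n)) :
    Commute (collectiveMatFam d n U) (permTensorMatFam d n π) := by
  rw [permTensorMatFam_eq_permMatrix, commute_permMatrix_iff]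
  intro h g
  simp only [collectiveMatFam, of_apply, diagPermHom_apply]
  exact prod_congr rfl fun i _ => Equiv.prod_comp (π i)⁻¹ fun k => U i (h i k) (g i k)

noncomputable def pairProfile (h g : ∀ i, Fin n → Fin (d i)) :
    (Σ i, Fin (d i) × Fin (d i)) →₀ ℕ :=
  ∑ i, ∑ k, Finsupp.single ⟨i, (h i k, g i k)⟩ 1

theorem pairProfile_apply (h g : ∀ i, Fin n → Fin (d i)) (i : Fin N)
    (v : Fin (d i) × Fin (d i)) : pairProfile h g ⟨i, v⟩ = #{k | (h i k, g i k) = v} := by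
  rw [pairProfile, Finsupp.finsetSum_apply, sum_eq_single i]
  · simp [Finsupp.finsetSum_apply, Finsupp.single_apply]
  · intro j _ hj
    simp [Finsupp.finsetSum_apply, hj]
  · simp

theorem eval_monomial_pairProfile (h g : ∀ i, Fin n → Fin (d i))
    (z : (Σ i, Fin (d i) × Fin (d i)) → ℂ) :
    eval z (monomial (pairProfile h g) 1) = ∏ i, ∏ k, z ⟨i, (h i k, g i k)⟩ := by
  simp only [pairProfile, monomial_sum_one, map_prod, eval_monomial, Finsupp.prod_single_index,
    pow_zero, pow_one, one_mul]

theorem exists_diagPermHom_of_pairProfile_eq {h g h' g' : ∀ i, Fin n → Fin (d i)}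
    (hp : pairProfile h g = pairProfile h' g') :
    ∃ π, diagPermHom d n π h' = h ∧ diagPermHom d n π g' = g := by
  have key : ∀ i, ∃ σ : Equiv.Perm (Fin n), ∀ k, (h i (σ k), g i (σ k)) = (h' i k, g' i k) :=
    fun i => exists_perm_comp_eq_of_card_fiber_eq fun v => by
      simpa only [pairProfile_apply] using DFunLike.congr_fun hp ⟨i, v⟩
  choose σ hσ using key
  refine ⟨σ, funext fun i => funext fun k => ?_, funext fun i => funext fun k => ?_⟩
  · rw [diagPermHom_apply]; simpa using (congrArg Prod.fst (hσ i ((σ i)⁻¹ k))).symm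
  · rw [diagPermHom_apply]; simpa using (congrArg Prod.snd (hσ i ((σ i)⁻¹ k))).symm

theorem mem_span_range_collectiveMatFam
    {X : Matrix (∀ i, Fin n → Fin (d i)) (∀ i, Fin n → Fin (d i)) ℂ}
    (hX : ∀ π h g, X (diagPermHom d n π h) (diagPermHom d n π g) = X h g) :
    X ∈ Submodule.span ℂ (Set.range (collectiveMatFam d n)) := by
  refine Submodule.mem_span_of_forall_dual fun f hf => ?_
  have hp : (∑ h, ∑ g, C (f (single h g 1)) * monomial (pairProfile h g) 1 :
      MvPolynomial (Σ i, Fin (d i) × Fin (d i)) ℂ) = 0 := by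
    refine MvPolynomial.funext fun z => ?_
    rw [eval_sum_dual, map_zero]
    refine hf _ ⟨fun i => of fun a b => z ⟨i, (a, b)⟩, ?_⟩
    ext h g
    simp only [collectiveMatFam, of_apply, eval_monomial_pairProfile]
  rw [dual_apply_eq_sum, ← Fintype.sum_prod_type']
  refine sum_mul_eq_zero_of_fiberwise (fun hg => pairProfile hg.1 hg.2) (fun a b hab => ?_)
    fun m => ?_
  · obtain ⟨π, ha₁, ha₂⟩ := exists_diagPermHom_of_pairProfile_eq hab
    rw [← ha₁, ← ha₂, hX]
  · have := congrArg (coeff m) hp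
    simp only [coeff_sum, coeff_C_mul, coeff_monomial, mul_ite, mul_one, mul_zero,
      coeff_zero] at this
    rwa [sum_filter, Fintype.sum_prod_type]

theorem collectiveMatFam_mem_span_unitaryGroup (M : ∀ i, Matrix (Fin (d i)) (Fin (d i)) ℂ) :
    collectiveMatFam d n M ∈ Submodule.span ℂ
      {Y | ∃ U : ∀ i, Matrix (Fin (d i)) (Fin (d i)) ℂ,
        (∀ i, U i ∈ unitaryGroup (Fin (d i)) ℂ) ∧ Y = collectiveMatFam d n U} := by
  have h := (piKroneckerMultilinear ℂ (fun i => Fin n → Fin (d i)) _).map_mem_span_image_pi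
    (x := fun i => piKronecker fun _ : Fin n => M i)
    fun i => piKronecker_const_mem_span_unitaryGroup (M i)
  refine Submodule.span_mono ?_ h
  rintro _ ⟨Y, hY, rfl⟩
  choose U hU hUY using fun i => hY i (Set.mem_univ i)
  exact ⟨U, hU, by simp [piKroneckerMultilinear, collectiveMatFam_eq_piKronecker, hUY]⟩

theorem commute_permTensorMatFam_iff_mem_span
    {X : Matrix (∀ i, Fin n → Fin (d i)) (∀ i, Fin n → Fin (d i)) ℂ} :
    (∀ π, Commute X (permTensorMatFam d n π)) ↔
      X ∈ Submodule.span ℂ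
        {Y | ∃ U : ∀ i, Matrix (Fin (d i)) (Fin (d i)) ℂ,
          (∀ i, U i ∈ unitaryGroup (Fin (d i)) ℂ) ∧ Y = collectiveMatFam d n U} := by
  refine ⟨fun hX => ?_, fun hX π => ?_⟩
  · have hinv : ∀ π h g, X (diagPermHom d n π h) (diagPermHom d n π g) = X h g := fun π =>
      (commute_permMatrix_iff X _).1 (permTensorMatFam_eq_permMatrix (d := d) π ▸ hX π)
    refine Submodule.span_le.2 ?_ (mem_span_range_collectiveMatFam hinv)
    rintro _ ⟨M, rfl⟩
    exact collectiveMatFam_mem_span_unitaryGroup M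
  · refine Commute.span_left ?_ X hX
    rintro _ ⟨U, -, rfl⟩
    exact commute_collectiveMatFam_permTensorMatFam U π

theorem forall_commute_collectiveMatFam_iff_mem_span
    {X : Matrix (∀ i, Fin n → Fin (d i)) (∀ i, Fin n → Fin (d i)) ℂ} :
    (∀ U : ∀ i, Matrix (Fin (d i)) (Fin (d i)) ℂ,
      (∀ i, U i ∈ unitaryGroup (Fin (d i)) ℂ) → Commute X (collectiveMatFam d n U)) ↔
      X ∈ Submodule.span ℂ {Y | ∃ π, Y = permTensorMatFam d n π} := by
  refine ⟨fun hX => ?_, fun hX U _ => ?_⟩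
  · have h := Matrix.mem_span_range_of_forall_commute (permMatrixHom.comp (diagPermHom d n))
      (X := X) fun Y hY => by
        refine Commute.span_right ?_ Y (commute_permTensorMatFam_iff_mem_span.1 fun π => ?_)
        · rintro _ ⟨U, hU, rfl⟩
          exact hX U hU
        · simpa [permTensorMatFam_eq_permMatrix] using hY π⁻¹
    refine Submodule.span_mono ?_ h
    rintro _ ⟨π, rfl⟩
    exact ⟨π⁻¹, by simp [permTensorMatFam_eq_permMatrix]⟩
  · refine Commute.span_left ?_ X hX
    rintro _ ⟨π, rfl⟩
    exact (commute_collectiveMatFam_permTensorMatFam U π).symm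

end SchurWeyl

theorem generalized_schur_weyl_duality_general
    (N n : ℕ) (d : Fin N → ℕ)
    (X : Matrix (∀ i, Fin n → Fin (d i)) (∀ i, Fin n → Fin (d i)) ℂ) :
    ((∀ π : Fin N → Equiv.Perm (Fin n),
        X * permTensorMatFam d n π = permTensorMatFam d n π * X) ↔
      X ∈ Submodule.span ℂ
        {Y : Matrix (∀ i, Fin n → Fin (d i)) (∀ i, Fin n → Fin (d i)) ℂ |
          ∃ U : ∀ i, Matrix (Fin (d i)) (Fin (d i)) ℂ,
            (∀ i, U i ∈ Matrix.unitaryGroup (Fin (d i)) ℂ) ∧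
            Y = collectiveMatFam d n U}) ∧
    ((∀ U : ∀ i, Matrix (Fin (d i)) (Fin (d i)) ℂ,
        (∀ i, U i ∈ Matrix.unitaryGroup (Fin (d i)) ℂ) →
        X * collectiveMatFam d n U = collectiveMatFam d n U * X) ↔
      X ∈ Submodule.span ℂ
        {Y : Matrix (∀ i, Fin n → Fin (d i)) (∀ i, Fin n → Fin (d i)) ℂ |
          ∃ π : Fin N → Equiv.Perm (Fin n), Y = permTensorMatFam d n π}) := by
  exact ⟨commute_permTensorMatFam_iff_mem_span, forall_commute_collectiveMatFam_iff_mem_span⟩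

theorem generalized_schur_weyl_duality
    (N n : ℕ) (hN : 1 ≤ N) (hn : 1 ≤ n) (d : Fin N → ℕ) (hd : ∀ i, 1 ≤ d i)
    (X : Matrix (∀ i, Fin n → Fin (d i)) (∀ i, Fin n → Fin (d i)) ℂ) :
    ((∀ π : Fin N → Equiv.Perm (Fin n),
        X * permTensorMatFam d n π = permTensorMatFam d n π * X) ↔
      X ∈ Submodule.span ℂ
        {Y : Matrix (∀ i, Fin n → Fin (d i)) (∀ i, Fin n → Fin (d i)) ℂ |
          ∃ U : ∀ i, Matrix (Fin (d i)) (Fin (d i)) ℂ,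
            (∀ i, U i ∈ Matrix.unitaryGroup (Fin (d i)) ℂ) ∧
            Y = collectiveMatFam d n U}) ∧
    ((∀ U : ∀ i, Matrix (Fin (d i)) (Fin (d i)) ℂ,
        (∀ i, U i ∈ Matrix.unitaryGroup (Fin (d i)) ℂ) →
        X * collectiveMatFam d n U = collectiveMatFam d n U * X) ↔
      X ∈ Submodule.span ℂ
        {Y : Matrix (∀ i, Fin n → Fin (d i)) (∀ i, Fin n → Fin (d i)) ℂ |
          ∃ π : Fin N → Equiv.Perm (Fin n), Y = permTensorMatFam d n π}) :=
  generalized_schur_weyl_duality_general N n d X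
end

section
/- Let G be a compact topological group and Π : G →* Matrix.orthogonalGroup (Fin n) ℝ a continuous monoid homomorphism (so G acts on ℝⁿ = (Fin n → ℝ) by w ↦ (Π g).val.mulVec w). For u, v : Fin n → ℝ, there exists g ∈ G with (Π g).val.mulVec u = v if and only if p(u) = p(v) for every Π-invariant polynomial p, where p : MvPolynomial (Fin n) ℝ is Π-invariant means MvPolynomial.eval ((Π g).val.mulVec w) p = MvPolynomial.eval w p for all g ∈ G and all w : Fin n → ℝ. -/
/-!
Orbits of a compact group are compact, so two distinct (hence disjoint) orbits are separated by
a polynomial `q` (Urysohn, then Stone–Weierstrass). Averaging `w ↦ q (ρ g⁻¹ w)` over the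
normalized Haar measure gives an invariant function that still separates the orbits, and it is a
polynomial: the coefficients of `q (A w)` are polynomials in the entries of `A`, so the averaged
coefficients are integrals of continuous functions over a fixed finite set of monomials.
-/

open Matrix

def IsInvariantPoly {G : Type*} [Group G] (n : ℕ)
    (Φ : G →* Matrix.orthogonalGroup (Fin n) ℝ)
    (p : MvPolynomial (Fin n) ℝ) : Prop :=
  ∀ (g : G) (w : Fin n → ℝ),
    MvPolynomial.eval ((Φ g : Matrix (Fin n) (Fin n) ℝ).mulVec w) p =
      MvPolynomial.eval w p

open MvPolynomial MeasureTheory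

namespace MvPolynomial

variable {σ : Type*}

theorem exists_near_continuous_of_isCompact {K : Set (σ → ℝ)} (hK : IsCompact K)
    (f : C(σ → ℝ, ℝ)) {ε : ℝ} (hε : 0 < ε) :
    ∃ q : MvPolynomial σ ℝ, ∀ x ∈ K, |eval x q - f x| < ε := by
  let toC : MvPolynomial σ ℝ →ₐ[ℝ] C(σ → ℝ, ℝ) :=
    aeval fun i => ⟨fun x => x i, continuous_apply i⟩
  have toC_apply (p : MvPolynomial σ ℝ) (x : σ → ℝ) : toC p x = eval x p := by
    rw [← ContinuousMap.evalAlgHom_apply ℝ, ← AlgHom.comp_apply, comp_aeval, aeval_eq_eval]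
    rfl
  have hsep : toC.range.SeparatesPoints := by
    intro x y hxy
    obtain ⟨i, hi⟩ := Function.ne_iff.mp hxy
    exact ⟨_, ⟨toC (X i), ⟨X i, rfl⟩, rfl⟩, by simpa [toC_apply] using hi⟩
  obtain ⟨_, ⟨q, rfl⟩, hq⟩ :=
    ContinuousMap.exists_mem_subalgebra_near_continuous_of_isCompact_of_separatesPoints
      hsep f hK hε
  exact ⟨q, fun x hx => by simpa [toC_apply, Real.norm_eq_abs] using hq x hx⟩

theorem exists_separating_of_isCompact [Finite σ] {K L : Set (σ → ℝ)} (hK : IsCompact K)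
    (hL : IsCompact L) (hKL : Disjoint K L) :
    ∃ q : MvPolynomial σ ℝ, (∀ x ∈ K, eval x q ≤ 0) ∧ ∀ y ∈ L, 1 ≤ eval y q := by
  obtain ⟨f, hfK, hfL, -⟩ :=
    exists_continuous_zero_one_of_isClosed hK.isClosed hL.isClosed hKL
  -- approximate `3 f - 1`, which is `-1` on `K` and `2` on `L`, to within `1`
  obtain ⟨q, hq⟩ :=
    exists_near_continuous_of_isCompact (hK.union hL) ((3 : ℝ) • f - 1) one_pos
  have hq' (x : σ → ℝ) (hx : x ∈ K ∪ L) : |eval x q - (3 * f x - 1)| < 1 := by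
    simpa using hq x hx
  refine ⟨q, fun x hx => ?_, fun y hy => ?_⟩
  · have hfx : f x = 0 := hfK hx
    linarith [(abs_lt.mp (hq' x (.inl hx))).2]
  · have hfy : f y = 1 := hfL hy
    linarith [(abs_lt.mp (hq' y (.inr hy))).1]

theorem exists_eval_eq_integral {X : Type*} [MeasurableSpace X] (μ : Measure X)
    (p : X → MvPolynomial σ ℝ) (S : Finset (σ →₀ ℕ)) (hS : ∀ x, (p x).support ⊆ S)
    (hp : ∀ m, Integrable (fun x => coeff m (p x)) μ) :
    ∃ P : MvPolynomial σ ℝ, ∀ w, eval w P = ∫ x, eval w (p x) ∂μ := by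
  refine ⟨∑ m ∈ S, monomial m (∫ x, coeff m (p x) ∂μ), fun w => ?_⟩
  have eval_p (x : X) :
      eval w (p x) = ∑ m ∈ S, coeff m (p x) * m.prod (fun i k => w i ^ k) :=
    (eval_eq _ _).trans <| Finset.sum_subset (hS x) fun m _ hm => by
      rw [notMem_support_iff.mp hm, zero_mul]
  simp_rw [eval_p, map_sum, eval_monomial]
  rw [integral_finsetSum _ fun m _ => (hp m).mul_const _]
  simp_rw [integral_mul_const]

variable {ι R : Type*} [Fintype ι] [CommSemiring R]

/-- `q (A w)` as a polynomial in `w` whose coefficients are polynomials in the entries of `A`. -/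
noncomputable def linearSubst (q : MvPolynomial ι R) :
    MvPolynomial ι (MvPolynomial (ι × ι) R) :=
  eval₂ (C.comp C) (fun i => ∑ j, C (X (i, j)) * X j) q

theorem eval_map_linearSubst (A : Matrix ι ι R) (w : ι → R) (q : MvPolynomial ι R) :
    eval w (map (eval fun ij => A ij.1 ij.2) (linearSubst q)) = eval (A *ᵥ w) q := by
  induction q using MvPolynomial.induction_on with
  | C a => simp [linearSubst]
  | add p r hp hr => simp_all [linearSubst]
  | mul_X p i hp => simp_all [linearSubst, mulVec, dotProduct]

end MvPolynomial

theorem disjoint_range_mulVec_of_forall_mulVec_ne {G ι R : Type*} [Group G] [Fintype ι]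
    [DecidableEq ι] [Semiring R] (ρ : G →* Matrix ι ι R) {u v : ι → R}
    (hne : ∀ g, ρ g *ᵥ u ≠ v) :
    Disjoint (Set.range (ρ · *ᵥ u)) (Set.range (ρ · *ᵥ v)) := by
  refine Set.disjoint_left.mpr ?_
  rintro _ ⟨a, rfl⟩ ⟨b, hb : ρ b *ᵥ v = ρ a *ᵥ u⟩
  refine hne (b⁻¹ * a) ?_
  rw [map_mul, ← mulVec_mulVec, ← hb, mulVec_mulVec, ← map_mul, inv_mul_cancel, map_one,
    one_mulVec]

theorem exists_invariant_eval_eq_integral {G ι : Type*} [Fintype ι] [DecidableEq ι] [Group G]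
    [TopologicalSpace G] [IsTopologicalGroup G] [CompactSpace G] [MeasurableSpace G] [BorelSpace G]
    (μ : Measure G) [IsFiniteMeasure μ] [μ.IsMulLeftInvariant]
    (ρ : G →* Matrix ι ι ℝ) (hρ : Continuous ρ) (q : MvPolynomial ι ℝ) :
    ∃ P : MvPolynomial ι ℝ, (∀ g w, eval (ρ g *ᵥ w) P = eval w P) ∧
      ∀ w, eval w P = ∫ g, eval (ρ g⁻¹ *ᵥ w) q ∂μ := by
  have hentries : Continuous fun (g : G) (ij : ι × ι) => ρ g⁻¹ ij.1 ij.2 :=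
    continuous_pi fun ij => (hρ.comp continuous_inv).matrix_elem ij.1 ij.2
  obtain ⟨P, hP⟩ := exists_eval_eq_integral μ
    (fun g => map (eval fun ij => ρ g⁻¹ ij.1 ij.2) (linearSubst q)) (linearSubst q).support
    (fun g => support_map_subset _ _) fun m => by
      simp only [coeff_map]
      exact ((continuous_eval _).comp hentries).integrable_of_hasCompactSupport
        (.of_compactSpace _)
  simp only [eval_map_linearSubst] at hP
  refine ⟨P, fun h w => ?_, hP⟩
  have hρ_mul (g : G) : ρ g⁻¹ *ᵥ ρ h *ᵥ w = ρ (h⁻¹ * g)⁻¹ *ᵥ w := by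
    rw [mulVec_mulVec, ← map_mul, _root_.mul_inv_rev, inv_inv]
  simp only [hP, hρ_mul]
  exact integral_mul_left_eq_self (fun g => eval (ρ g⁻¹ *ᵥ w) q) h⁻¹

theorem orbit_iff_invariant_polynomials
    {G : Type*} [Group G] [TopologicalSpace G] [IsTopologicalGroup G] [CompactSpace G]
    (n : ℕ) (Φ : G →* Matrix.orthogonalGroup (Fin n) ℝ)
    (hΦ : Continuous fun g => (Φ g : Matrix (Fin n) (Fin n) ℝ))
    (u v : Fin n → ℝ) :
    (∃ g : G, (Φ g : Matrix (Fin n) (Fin n) ℝ).mulVec u = v) ↔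
    (∀ p : MvPolynomial (Fin n) ℝ, IsInvariantPoly n Φ p →
      MvPolynomial.eval u p = MvPolynomial.eval v p) := by
  refine ⟨fun ⟨g, hg⟩ p hp => hg ▸ (hp g u).symm, fun h => ?_⟩
  by_contra! hne
  borelize G
  let μ : Measure G := Measure.haarMeasure ⊤
  have : IsProbabilityMeasure μ := ⟨Measure.haarMeasure_self⟩
  let ρ : G →* Matrix (Fin n) (Fin n) ℝ := (orthogonalGroup (Fin n) ℝ).subtype.comp Φ
  obtain ⟨q, hqu, hqv⟩ := exists_separating_of_isCompact
    (isCompact_range (hΦ.matrix_mulVec continuous_const))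
    (isCompact_range (hΦ.matrix_mulVec continuous_const))
    (disjoint_range_mulVec_of_forall_mulVec_ne ρ hne)
  obtain ⟨P, hPinv, hP⟩ := exists_invariant_eval_eq_integral μ ρ hΦ q
  have hint : Integrable (fun g => eval (ρ g⁻¹ *ᵥ v) q) μ :=
    ((continuous_eval q).comp ((hΦ.comp continuous_inv).matrix_mulVec continuous_const))
      |>.integrable_of_hasCompactSupport (.of_compactSpace _)
  have hPu : eval u P ≤ 0 := by
    rw [hP]
    exact integral_nonpos fun g => hqu _ ⟨g⁻¹, rfl⟩
  have hPv : 1 ≤ eval v P := by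
    rw [hP]
    calc (1 : ℝ) = ∫ _, (1 : ℝ) ∂μ := by simp
      _ ≤ _ := integral_mono (integrable_const _) hint fun g => hqv _ ⟨g⁻¹, rfl⟩
  linarith [h P hPinv]
end

section
/- For w ∈ [0,1], let ρ_w := w • (outer product |ψ⁻⟩⟨ψ⁻|) + ((1−w)/4) • I₄, where ψ⁻ : (Fin 2 × Fin 2) → ℂ is the singlet vector with ψ⁻(0,1) = 1/√2, ψ⁻(1,0) = −1/√2, and ψ⁻ = 0 at the other two indices, and I₄ is the identity matrix on Fin 2 × Fin 2. Then ρ_w is a two-qubit density matrix, and ρ_w is entangled if and only if 1/3 < w. -/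
open Matrix Kronecker ComplexOrder

/-- Separability of a two-qubit state. -/
def Separable (ρ : Matrix (Fin 2 × Fin 2) (Fin 2 × Fin 2) ℂ) : Prop :=
  ∃ (m : ℕ) (p : Fin m → ℝ) (ρA ρB : Fin m → Matrix (Fin 2) (Fin 2) ℂ),
    (∀ k, 0 ≤ p k) ∧ (∑ k, p k = 1) ∧
    (∀ k, (ρA k).PosSemidef ∧ (ρA k).trace = 1) ∧
    (∀ k, (ρB k).PosSemidef ∧ (ρB k).trace = 1) ∧
    ρ = ∑ k, (p k : ℂ) • (ρA k ⊗ₖ ρB k)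

/-- The singlet vector `|ψ⁻⟩`. -/
noncomputable def psiMinus : Fin 2 × Fin 2 → ℂ := fun p =>
  if p = ((0 : Fin 2), (1 : Fin 2)) then ((1 / Real.sqrt 2 : ℝ) : ℂ)
  else if p = ((1 : Fin 2), (0 : Fin 2)) then (-(1 / Real.sqrt 2 : ℝ) : ℂ)
  else 0

/-- The two-qubit Werner state. -/
noncomputable def wernerState (w : ℝ) :
    Matrix (Fin 2 × Fin 2) (Fin 2 × Fin 2) ℂ :=
  (w : ℂ) • Matrix.vecMulVec psiMinus (star psiMinus)
    + (((1 - w) / 4 : ℝ) : ℂ) • (1 : Matrix (Fin 2 × Fin 2) (Fin 2 × Fin 2) ℂ)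

/-!
For qubit states `A`, `B` one has `⟨ψ⁻| A ⊗ B |ψ⁻⟩ = (tr A · tr B - tr (A B)) / 2 ≤ 1 / 2`, because
the trace of a product of positive semidefinite matrices is nonnegative. By linearity every
separable state has singlet fidelity at most `1 / 2`, while that of `ρ_w` is `(1 + 3w) / 4`.

Conversely `|ψ⁻⟩⟨ψ⁻| = (1 - ∑ᵢ σᵢ ⊗ σᵢ) / 4` in terms of the Pauli matrices. With the
eigenprojections `Pᵢˢ = (1 + s σᵢ) / 2`, `s = ±1`, this gives
`ρ_w = ∑ᵢₛₜ (1 - 3 w s t) / 12 • Pᵢˢ ⊗ Pᵢᵗ`, a convex combination of product states as soon as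
`|w| ≤ 1 / 3`.
-/

open scoped MatrixOrder in
theorem Matrix.PosSemidef.trace_mul_nonneg {n 𝕜 : Type*} [Fintype n] [RCLike 𝕜]
    {A B : Matrix n n 𝕜} (hA : A.PosSemidef) (hB : B.PosSemidef) : 0 ≤ (A * B).trace := by
  classical
  obtain ⟨X, rfl⟩ := CStarAlgebra.nonneg_iff_eq_star_mul_self.mp hA.nonneg
  rw [star_eq_conjTranspose, Matrix.mul_assoc, trace_mul_comm]
  exact (hB.mul_mul_conjTranspose_same X).trace_nonneg

theorem separable_of_sum {ι : Type*} [Fintype ι] (p : ι → ℝ)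
    (ρA ρB : ι → Matrix (Fin 2) (Fin 2) ℂ) (hp : ∀ k, 0 ≤ p k) (hp1 : ∑ k, p k = 1)
    (hA : ∀ k, (ρA k).PosSemidef ∧ (ρA k).trace = 1)
    (hB : ∀ k, (ρB k).PosSemidef ∧ (ρB k).trace = 1) :
    Separable (∑ k, (p k : ℂ) • (ρA k ⊗ₖ ρB k)) := by
  let e := (Fintype.equivFin ι).symm
  refine ⟨_, p ∘ e, ρA ∘ e, ρB ∘ e, fun k => hp _, ?_, fun k => hA _, fun k => hB _, ?_⟩
  · rwa [← e.sum_comp] at hp1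
  · exact (e.sum_comp _).symm

@[simp]
theorem ofReal_sqrt_two_inv_mul_self : ((√2 : ℝ) : ℂ)⁻¹ * ((√2 : ℝ) : ℂ)⁻¹ = 1 / 2 := by
  rw [← mul_inv, ← Complex.ofReal_mul, Real.mul_self_sqrt zero_le_two]
  norm_num

theorem star_psiMinus_dotProduct_psiMinus : star psiMinus ⬝ᵥ psiMinus = 1 := by
  simp [dotProduct, Fintype.sum_prod_type, psiMinus]
  norm_num

noncomputable def singletFidelity (ρ : Matrix (Fin 2 × Fin 2) (Fin 2 × Fin 2) ℂ) : ℂ :=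
  star psiMinus ⬝ᵥ ρ *ᵥ psiMinus

theorem singletFidelity_kronecker (A B : Matrix (Fin 2) (Fin 2) ℂ) :
    singletFidelity (A ⊗ₖ B) = (A.trace * B.trace - (A * B).trace) / 2 := by
  simp [singletFidelity, dotProduct, mulVec, Fintype.sum_prod_type, psiMinus, trace_fin_two,
    mul_apply]
  linear_combination (A 0 0 * B 1 1 - A 0 1 * B 1 0 - A 1 0 * B 0 1 + A 1 1 * B 0 0) *
    ofReal_sqrt_two_inv_mul_self

theorem singletFidelity_kronecker_le {A B : Matrix (Fin 2) (Fin 2) ℂ}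
    (hA : A.PosSemidef) (hAt : A.trace = 1) (hB : B.PosSemidef) (hBt : B.trace = 1) :
    singletFidelity (A ⊗ₖ B) ≤ 1 / 2 := by
  rw [singletFidelity_kronecker, hAt, hBt, one_mul]
  gcongr
  exact sub_le_self _ (hA.trace_mul_nonneg hB)

theorem Separable.singletFidelity_le {ρ : Matrix (Fin 2 × Fin 2) (Fin 2 × Fin 2) ℂ}
    (h : Separable ρ) : singletFidelity ρ ≤ 1 / 2 := by
  obtain ⟨m, p, ρA, ρB, hp, hp1, hA, hB, rfl⟩ := h
  calc singletFidelity (∑ k, (p k : ℂ) • (ρA k ⊗ₖ ρB k))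
      = ∑ k, (p k : ℂ) * singletFidelity (ρA k ⊗ₖ ρB k) := by
        simp only [singletFidelity, sum_mulVec, dotProduct_sum, smul_mulVec, dotProduct_smul,
          smul_eq_mul]
    _ ≤ ∑ k, (p k : ℂ) * (1 / 2) := by
        gcongr with k
        · exact_mod_cast hp k
        · exact singletFidelity_kronecker_le (hA k).1 (hA k).2 (hB k).1 (hB k).2
    _ = 1 / 2 := by rw [← Finset.sum_mul, ← Complex.ofReal_sum, hp1, Complex.ofReal_one, one_mul]

theorem singletFidelity_wernerState (w : ℝ) :
    singletFidelity (wernerState w) = ((1 + 3 * w) / 4 : ℝ) := by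
  simp [singletFidelity, wernerState, add_mulVec, smul_mulVec, vecMulVec_mulVec, dotProduct_add,
    dotProduct_smul, star_psiMinus_dotProduct_psiMinus]
  ring

theorem trace_wernerState (w : ℝ) : (wernerState w).trace = 1 := by
  simp [wernerState, dotProduct_comm psiMinus, star_psiMinus_dotProduct_psiMinus]

theorem posSemidef_wernerState {w : ℝ} (hw0 : 0 ≤ w) (hw1 : w ≤ 1) :
    (wernerState w).PosSemidef :=
  ((posSemidef_vecMulVec_self_star psiMinus).smul (Complex.zero_le_real.mpr hw0)).add
    (PosSemidef.one.smul (Complex.zero_le_real.mpr (by linarith)))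

section SpinProj

variable {n : Type*} [DecidableEq n]

noncomputable def spinProj (σ : Matrix n n ℂ) (b : Bool) : Matrix n n ℂ :=
  (1 / 2 : ℂ) • (1 + (if b then 1 else -1 : ℂ) • σ)

theorem isStarProjection_spinProj [Fintype n] {σ : Matrix n n ℂ} (hσ : σ.IsHermitian)
    (hσσ : σ * σ = 1) (b : Bool) : IsStarProjection (spinProj σ b) := by
  constructor
  · cases b <;> simp [IsIdempotentElem, spinProj, add_mul, mul_add, hσσ] <;> module
  · cases b <;> simp [IsSelfAdjoint, spinProj, star_eq_conjTranspose, hσ.eq]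

open scoped MatrixOrder in
theorem posSemidef_spinProj [Fintype n] {σ : Matrix n n ℂ} (hσ : σ.IsHermitian)
    (hσσ : σ * σ = 1) (b : Bool) : (spinProj σ b).PosSemidef :=
  (isStarProjection_spinProj hσ hσσ b).nonneg.posSemidef

theorem trace_spinProj [Fintype n] {σ : Matrix n n ℂ} (hσ : σ.trace = 0) (b : Bool) :
    (spinProj σ b).trace = Fintype.card n / 2 := by
  cases b <;> simp [spinProj, hσ] <;> ring

end SpinProj

noncomputable def pauli : Fin 3 → Matrix (Fin 2) (Fin 2) ℂ :=
  ![!![0, 1; 1, 0], !![0, -Complex.I; Complex.I, 0], !![1, 0; 0, -1]]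

theorem pauli_isHermitian (i : Fin 3) : (pauli i).IsHermitian := by
  fin_cases i <;> ext a b <;> fin_cases a <;> fin_cases b <;> simp [pauli]

theorem pauli_mul_self (i : Fin 3) : pauli i * pauli i = 1 := by
  fin_cases i <;> ext a b <;> fin_cases a <;> fin_cases b <;> simp [pauli]

theorem trace_pauli (i : Fin 3) : (pauli i).trace = 0 := by
  fin_cases i <;> simp [pauli, trace_fin_two]

theorem spinProj_pauli_isState (i : Fin 3) (b : Bool) :
    (spinProj (pauli i) b).PosSemidef ∧ (spinProj (pauli i) b).trace = 1 :=
  ⟨posSemidef_spinProj (pauli_isHermitian i) (pauli_mul_self i) b,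
    by simp [trace_spinProj (trace_pauli i)]⟩

theorem vecMulVec_psiMinus_eq_pauli :
    vecMulVec psiMinus (star psiMinus) = (1 / 4 : ℂ) • (1 - ∑ i, pauli i ⊗ₖ pauli i) := by
  ext ⟨a, b⟩ ⟨c, d⟩
  fin_cases a <;> fin_cases b <;> fin_cases c <;> fin_cases d <;>
    simp [pauli, psiMinus, Fin.sum_univ_three, vecMulVec_apply, one_apply] <;> norm_num

noncomputable def wernerWeight (w : ℝ) (b c : Bool) : ℝ :=
  if b = c then (1 - 3 * w) / 12 else (1 + 3 * w) / 12

theorem wernerWeight_nonneg {w : ℝ} (hw₁ : -1 / 3 ≤ w) (hw₂ : w ≤ 1 / 3) (b c : Bool) :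
    0 ≤ wernerWeight w b c := by
  unfold wernerWeight
  split_ifs <;> linarith

theorem sum_wernerWeight (w : ℝ) :
    ∑ x : Fin 3 × Bool × Bool, wernerWeight w x.2.1 x.2.2 = 1 := by
  simp [Fintype.sum_prod_type, wernerWeight]
  ring

theorem sum_wernerWeight_smul_spinProj_kronecker {n : Type*} [DecidableEq n] (w : ℝ)
    (σ : Matrix n n ℂ) :
    ∑ b, ∑ c, (wernerWeight w b c : ℂ) • (spinProj σ b ⊗ₖ spinProj σ c) =
      (1 / 12 : ℂ) • (1 - (3 * w : ℂ) • (σ ⊗ₖ σ)) := by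
  simp only [Fintype.sum_bool, wernerWeight, spinProj, if_true, if_false, Bool.true_eq_false,
    Bool.false_eq_true, add_kronecker, kronecker_add, smul_kronecker, kronecker_smul,
    one_kronecker_one]
  push_cast
  module

theorem wernerState_eq_sum (w : ℝ) :
    wernerState w = ∑ x : Fin 3 × Bool × Bool, (wernerWeight w x.2.1 x.2.2 : ℂ) •
      (spinProj (pauli x.1) x.2.1 ⊗ₖ spinProj (pauli x.1) x.2.2) := by
  simp only [Fintype.sum_prod_type, sum_wernerWeight_smul_spinProj_kronecker, wernerState,
    vecMulVec_psiMinus_eq_pauli, Fin.sum_univ_three]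
  push_cast
  module

theorem separable_wernerState {w : ℝ} (hw₁ : -1 / 3 ≤ w) (hw₂ : w ≤ 1 / 3) :
    Separable (wernerState w) := by
  rw [wernerState_eq_sum]
  exact separable_of_sum _ _ _ (fun x => wernerWeight_nonneg hw₁ hw₂ _ _) (sum_wernerWeight w)
    (fun x => spinProj_pauli_isState _ _) (fun x => spinProj_pauli_isState _ _)

theorem werner_state_entangled_iff (w : ℝ) (hw0 : 0 ≤ w) (hw1 : w ≤ 1) :
    ((wernerState w).PosSemidef ∧ (wernerState w).trace = 1) ∧
    (¬ Separable (wernerState w) ↔ 1 / 3 < w) := by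
  refine ⟨⟨posSemidef_wernerState hw0 hw1, trace_wernerState w⟩, fun hent => ?_, fun hw hsep => ?_⟩
  · by_contra! hw
    exact hent (separable_wernerState (by linarith) hw)
  · have hfid := hsep.singletFidelity_le
    rw [singletFidelity_wernerState, show (1 / 2 : ℂ) = ((1 / 2 : ℝ) : ℂ) by norm_num,
      Complex.real_le_real] at hfid
    linarith
end

section
/- For every M : Matrix (Fin 3) (Fin 3) ℝ, writing s := (1/2)·((trace (Mᵀ * M))² − trace ((Mᵀ * M)^2)), one has: (i) Matrix.adjugate M * (Matrix.adjugate M)ᵀ = (Mᵀ * M)^2 − trace (Mᵀ * M) • (Mᵀ * M) + s • I₃; and (ii) trace (Matrix.adjugate M * (Matrix.adjugate M)ᵀ) = s. -/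
open Matrix

lemma adj_fin_three (N : Matrix (Fin 3) (Fin 3) ℝ) :
    N.adjugate = N ^ 2 - N.trace • N
      + ((1 / 2) * (N.trace ^ 2 - (N ^ 2).trace)) • (1 : Matrix (Fin 3) (Fin 3) ℝ) := by
  ext i j
  fin_cases i <;> fin_cases j <;>
    simp [adjugate_fin_three, mul_apply, trace_fin_three, pow_two, Fin.sum_univ_succ,
      Matrix.one_apply] <;> ring

theorem adjugate_mul_adjugate_transpose (M : Matrix (Fin 3) (Fin 3) ℝ) :
    (M.adjugate * (M.adjugate)ᵀ =
        (Mᵀ * M) ^ 2 - ((Mᵀ * M).trace) • (Mᵀ * M)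
          + ((1 / 2) * (((Mᵀ * M).trace) ^ 2 - ((Mᵀ * M) ^ 2).trace)) •
              (1 : Matrix (Fin 3) (Fin 3) ℝ)) ∧
    ((M.adjugate * (M.adjugate)ᵀ).trace =
        (1 / 2) * (((Mᵀ * M).trace) ^ 2 - ((Mᵀ * M) ^ 2).trace)) := by
  have h1 : M.adjugate * (M.adjugate)ᵀ = (Mᵀ * M).adjugate := by
    rw [adjugate_mul_distrib, adjugate_transpose]
  refine ⟨h1.trans (adj_fin_three _), ?_⟩
  rw [h1, adj_fin_three]
  simp [trace_add, trace_sub, trace_smul, trace_one, smul_eq_mul]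
  ring
end

section
/- For all A, B : Matrix (Fin 3) (Fin 3) ℝ: Σ_{i=1}^{3} (A.mulVec eᵢ) × (B.mulVec eᵢ) = Σ_{i=1}^{3} ((A * Bᵀ).mulVec eᵢ) × eᵢ = Σ_{i=1}^{3} eᵢ × ((B * Aᵀ).mulVec eᵢ), where e₁, e₂, e₃ is the standard basis of Fin 3 → ℝ and × is the cross product. -/
open Matrix

theorem sum_cross_columns (A B : Matrix (Fin 3) (Fin 3) ℝ) :
    (∑ i : Fin 3,
        crossProduct (A.mulVec (Pi.single i 1)) (B.mulVec (Pi.single i 1)) =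
      ∑ i : Fin 3,
        crossProduct ((A * Bᵀ).mulVec (Pi.single i 1)) (Pi.single i 1)) ∧
    (∑ i : Fin 3,
        crossProduct (A.mulVec (Pi.single i 1)) (B.mulVec (Pi.single i 1)) =
      ∑ i : Fin 3,
        crossProduct (Pi.single i 1) ((B * Aᵀ).mulVec (Pi.single i 1))) := by
  constructor <;>
  · ext i
    fin_cases i <;>
      simp [crossProduct, mulVec, dotProduct, Fin.sum_univ_three, Matrix.mul_apply,
        Pi.single_apply] <;> ring
end

section
/- For all M, T : Matrix (Fin 3) (Fin 3) ℝ: Ω(M, (Matrix.adjugate T)ᵀ) = trace (Mᵀ * T) • T − T * Mᵀ * T. In particular, Ω(T, (Matrix.adjugate T)ᵀ) = trace (Tᵀ * T) • T − T * Tᵀ * T. -/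
set_option maxHeartbeats 4000000
open Matrix

/-- The symmetric bilinear matrix-valued map `Ω(M,N)`: its `i`-th row is
`r_{i+1}(M) × r_{i+2}(N) + r_{i+1}(N) × r_{i+2}(M)` (rows indexed cyclically). -/
def Omega (M N : Matrix (Fin 3) (Fin 3) ℝ) : Matrix (Fin 3) (Fin 3) ℝ :=
  Matrix.of fun i =>
    crossProduct (M (i + 1)) (N (i + 2)) + crossProduct (N (i + 1)) (M (i + 2))

lemma key (M T : Matrix (Fin 3) (Fin 3) ℝ) :
    Omega M ((Matrix.adjugate T)ᵀ) = ((Mᵀ * T).trace) • T - T * Mᵀ * T := by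
  rw [show T.adjugateᵀ = Tᵀ.adjugate from (Matrix.adjugate_transpose T)]
  ext i j
  fin_cases i <;> fin_cases j <;>
    simp [Omega, crossProduct, Matrix.adjugate_fin_three, Matrix.mul_apply,
      Matrix.trace_fin_three, Fin.sum_univ_three] <;> ring

theorem omega_adjugate_transpose (M T : Matrix (Fin 3) (Fin 3) ℝ) :
    (Omega M ((Matrix.adjugate T)ᵀ) = ((Mᵀ * T).trace) • T - T * Mᵀ * T) ∧
    (Omega T ((Matrix.adjugate T)ᵀ) = ((Tᵀ * T).trace) • T - T * Tᵀ * T) := by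
  exact ⟨key M T, key T T⟩
end

section
/- For all A, B, T : Matrix (Fin 3) (Fin 3) ℝ: (i) Ω(T, A * T) = trace A • (Matrix.adjugate T)ᵀ − Aᵀ * (Matrix.adjugate T)ᵀ; and (ii) Ω(T, T * B) = trace B • (Matrix.adjugate T)ᵀ − (Matrix.adjugate T)ᵀ * Bᵀ. -/
open Matrix

set_option maxHeartbeats 4000000 in
theorem omega_mul_left_right (A B T : Matrix (Fin 3) (Fin 3) ℝ) :
    (Omega T (A * T) =
        (A.trace) • (Matrix.adjugate T)ᵀ - Aᵀ * (Matrix.adjugate T)ᵀ) ∧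
    (Omega T (T * B) =
        (B.trace) • (Matrix.adjugate T)ᵀ - (Matrix.adjugate T)ᵀ * Bᵀ) := by
  constructor <;>
  · ext i j
    fin_cases i <;> fin_cases j <;>
      simp [Omega, crossProduct, adjugate_fin_three, Matrix.mul_apply, Matrix.transpose_apply, Matrix.vecHead, Matrix.vecTail, Function.comp,
        Fin.sum_univ_three, trace_fin_three, Matrix.smul_apply, Matrix.sub_apply] <;>
      ring_nf
end
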